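/- arXiv:1411.6723 — 3 statements merged into one kernel-verified Lean document; each statement's English description precedes it below -/
import Mathlib

section
/- Let X be a finite simple graph on n vertices. Then ϑ(X)·ϑ̄(X) ≥ n, where ϑ(X) is the supremum of ∑_{x,x'} M_{x,x'} over real positive semidefinite matrices M indexed by V(X) with tr(M) = 1 and M_{x,x'} = 0 whenever x is adjacent to x', and ϑ̄(X) is the infimum of t ∈ ℝ such that there exists a real positive semidefinite matrix N indexed by V(X) with N_{x,x} = t for all x, N_{x,x'} = 0 whenever x is adjacent to x', and N − J positive semidefinite (J the all-ones matrix). Moreover, if X is vertex-transitive then ϑ(X)·ϑ̄(X) = n. -/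
open Matrix

/-- The Lovász theta function `ϑ(Z)`. -/
noncomputable def lovTheta {γ : Type*} [Fintype γ] (Z : SimpleGraph γ) : ℝ :=
  sSup {r : ℝ | ∃ M : Matrix γ γ ℝ, M.PosSemidef ∧ M.trace = 1 ∧
    (∀ z z', Z.Adj z z' → M z z' = 0) ∧ r = ∑ z, ∑ z', M z z'}

/-- The dual formulation `ϑ̄(Z) = Θ^{S₊}(Z)`. -/
noncomputable def lovThetaBar {γ : Type*} [Fintype γ] (Z : SimpleGraph γ) : ℝ :=
  sInf {t : ℝ | ∃ N : Matrix γ γ ℝ, N.PosSemidef ∧ (∀ z, N z z = t) ∧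
    (∀ z z', Z.Adj z z' → N z z' = 0) ∧
    (N - Matrix.of fun _ _ => (1 : ℝ)).PosSemidef}

/-!
Duality in one direction: if `N` is feasible for `ϑ̄` with diagonal `t`, then `N / (n t)` is
feasible for `ϑ`, and its entries sum to at least `n / t` because `N - J ⪰ 0`; hence `ϑ ϑ̄ ≥ n`.

Conversely, if `X` is vertex-transitive, averaging a feasible `M` for `ϑ` over `Aut X` gives an
invariant matrix with constant diagonal and constant row sums. Rescaled so that the row sums
equal `n`, its diagonal is `n / ∑ M`, and `N - J ⪰ 0` because `N` fixes the all-ones vector and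
`J` vanishes on its orthogonal complement. Hence `ϑ̄ ≤ n / ∑ M` for every feasible `M`.
-/

local notation "𝐉" => Matrix.of fun _ _ => (1 : ℝ)

section AllOnes

variable {ι : Type*} [Fintype ι]

theorem dotProduct_allOnes_mulVec (x : ι → ℝ) : x ⬝ᵥ 𝐉 *ᵥ x = (∑ i, x i) ^ 2 := by
  simp [mulVec, dotProduct, sq, ← Finset.sum_mul]

omit [Fintype ι] in
theorem isHermitian_allOnes : (𝐉 : Matrix ι ι ℝ).IsHermitian := by
  ext; simp

theorem posSemidef_card_smul_one_sub_allOnes [DecidableEq ι] :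
    ((Fintype.card ι : ℝ) • (1 : Matrix ι ι ℝ) - 𝐉).PosSemidef := by
  refine .of_dotProduct_mulVec_nonneg
    ((isHermitian_one.smul (IsSelfAdjoint.natCast _)).sub isHermitian_allOnes) fun x => ?_
  have := sq_sum_le_card_mul_sum_sq (s := Finset.univ) (f := x)
  simp only [star_trivial, sub_mulVec, dotProduct_sub, dotProduct_allOnes_mulVec, smul_mulVec,
    one_mulVec, dotProduct_smul, smul_eq_mul]
  simpa [dotProduct, sq] using this

end AllOnes

namespace Matrix.PosSemidef

variable {ι : Type*} [Fintype ι] {A : Matrix ι ι ℝ}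

theorem two_mul_apply_le (hA : A.PosSemidef) (i j : ι) : 2 * A i j ≤ A i i + A j j := by
  classical
  have hsymm : A j i = A i j := by simpa using hA.isHermitian.apply i j
  have h := hA.dotProduct_mulVec_nonneg (Pi.single i 1 - Pi.single j 1)
  simp [mulVec_sub, dotProduct_sub, sub_dotProduct] at h
  linarith

theorem sum_apply_le_card_mul_trace (hA : A.PosSemidef) :
    ∑ i, ∑ j, A i j ≤ Fintype.card ι * A.trace :=
  calc ∑ i, ∑ j, A i j ≤ ∑ i, ∑ j, (A i i + A j j) / 2 :=
        Finset.sum_le_sum fun i _ => Finset.sum_le_sum fun j _ => by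
          linarith [hA.two_mul_apply_le i j]
    _ = Fintype.card ι * A.trace := by
        simp only [trace, diag, ← Finset.sum_div, Finset.sum_add_distrib, Finset.sum_const,
          Finset.card_univ, nsmul_eq_mul, ← Finset.mul_sum]
        ring

theorem sum_apply_nonneg (hA : A.PosSemidef) : 0 ≤ ∑ i, ∑ j, A i j := by
  simpa [dotProduct, mulVec, Finset.mul_sum] using hA.dotProduct_mulVec_nonneg 1

/-- With `y = x - (∑ x / n) • 1`, the row-sum condition gives `xᵀ (A - J) x = yᵀ A y`. -/
theorem sub_allOnes [Nonempty ι] (hA : A.PosSemidef) (hrow : ∀ i, ∑ j, A i j = Fintype.card ι) :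
    (A - 𝐉).PosSemidef := by
  have hcol : ∀ j, ∑ i, A i j = Fintype.card ι := fun j => by
    simpa [← hA.isHermitian.apply j] using hrow j
  refine .of_dotProduct_mulVec_nonneg (hA.isHermitian.sub isHermitian_allOnes) fun x => ?_
  set y : ι → ℝ := fun i => x i - (∑ k, x k) / Fintype.card ι
  have hquad : star x ⬝ᵥ (A - 𝐉) *ᵥ x = y ⬝ᵥ A *ᵥ y := by
    simp only [y, star_trivial, sub_mulVec, dotProduct_sub, dotProduct_allOnes_mulVec]
    simp only [dotProduct, mulVec, mul_sub, sub_mul, Finset.sum_sub_distrib, ← Finset.mul_sum,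
      ← Finset.sum_mul, hrow]
    rw [Finset.sum_comm (f := fun i j => A i j * x j)]
    simp only [← Finset.sum_mul, hcol, Finset.sum_const, Finset.card_univ, nsmul_eq_mul,
      ← Finset.mul_sum]
    field_simp
    ring
  rw [hquad]
  exact hA.dotProduct_mulVec_nonneg y

end Matrix.PosSemidef

theorem sum_comp_smul {G ι M : Type*} [Group G] [MulAction G ι] [Fintype ι] [AddCommMonoid M]
    (g : G) (f : ι → M) : ∑ i, f (g • i) = ∑ i, f i :=
  Equiv.sum_comp (MulAction.toPerm g) f

namespace Matrix

section GroupSum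

variable (Γ : Type*) {ι R : Type*} [Group Γ] [Fintype Γ] [MulAction Γ ι] [AddCommMonoid R]

def groupSum (M : Matrix ι ι R) : Matrix ι ι R :=
  ∑ g : Γ, M.submatrix (g • ·) (g • ·)

variable (M : Matrix ι ι R)

@[simp]
theorem groupSum_apply (i j : ι) : groupSum Γ M i j = ∑ g : Γ, M (g • i) (g • j) := by
  simp [groupSum, sum_apply]

theorem groupSum_smul_apply (h : Γ) (i j : ι) :
    groupSum Γ M (h • i) (h • j) = groupSum Γ M i j := by
  simp only [groupSum_apply, smul_smul]
  exact Fintype.sum_equiv (Equiv.mulRight h) _ _ fun _ => rfl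

theorem groupSum_apply_eq_zero {p : ι → ι → Prop} (hp : ∀ (g : Γ) i j, p i j → p (g • i) (g • j))
    (hM : ∀ i j, p i j → M i j = 0) {i j : ι} (hij : p i j) : groupSum Γ M i j = 0 := by
  simp [hM _ _ (hp _ _ _ hij)]

theorem PosSemidef.groupSum {M : Matrix ι ι ℝ} (hM : M.PosSemidef) :
    (groupSum Γ M).PosSemidef :=
  posSemidef_sum _ fun _ _ => hM.submatrix _

variable [Fintype ι]

theorem trace_groupSum : (groupSum Γ M).trace = Fintype.card Γ • M.trace := by
  simp only [trace, diag, groupSum_apply]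
  rw [Finset.sum_comm, ← Finset.card_univ, ← Finset.sum_const]
  exact Finset.sum_congr rfl fun g _ => sum_comp_smul g fun i => M i i

theorem sum_groupSum_apply :
    ∑ i, ∑ j, groupSum Γ M i j = Fintype.card Γ • ∑ i, ∑ j, M i j := by
  simp only [groupSum_apply]
  rw [← Finset.card_univ, ← Finset.sum_const]
  conv_lhs => enter [2, i]; rw [Finset.sum_comm]
  rw [Finset.sum_comm]
  refine Finset.sum_congr rfl fun g _ => ?_
  simp only [sum_comp_smul g (M (g • _)), sum_comp_smul g fun i => ∑ j, M i j]

end GroupSum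

section Invariant

variable (Γ : Type*) {ι R : Type*} [Group Γ] [MulAction Γ ι] [MulAction.IsPretransitive Γ ι]
  [Fintype ι] [AddCommMonoid R] {A : Matrix ι ι R}

theorem card_smul_apply_self_of_smul_invariant (hA : ∀ (g : Γ) i j, A (g • i) (g • j) = A i j)
    (i : ι) : Fintype.card ι • A i i = A.trace := by
  have hdiag : ∀ j, A j j = A i i := fun j => by
    obtain ⟨g, rfl⟩ := MulAction.exists_smul_eq Γ i j
    exact hA g i i
  simp [trace, hdiag]

theorem card_smul_sum_apply_of_smul_invariant (hA : ∀ (g : Γ) i j, A (g • i) (g • j) = A i j)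
    (i : ι) : Fintype.card ι • ∑ j, A i j = ∑ i, ∑ j, A i j := by
  have hrow : ∀ j, ∑ k, A j k = ∑ k, A i k := fun j => by
    obtain ⟨g, rfl⟩ := MulAction.exists_smul_eq Γ i j
    rw [← sum_comp_smul g]
    exact Finset.sum_congr rfl fun k _ => hA g i k
  simp [hrow]

end Invariant

end Matrix

instance SimpleGraph.Iso.finite {V : Type*} [Finite V] (G : SimpleGraph V) : Finite (G ≃g G) :=
  Finite.of_injective _ RelIso.toEquiv_injective

section LovaszTheta

variable {γ : Type*} [Fintype γ] (X : SimpleGraph γ)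

theorem sum_le_lovTheta {M : Matrix γ γ ℝ} (hM : M.PosSemidef) (htr : M.trace = 1)
    (hadj : ∀ z z', X.Adj z z' → M z z' = 0) : ∑ z, ∑ z', M z z' ≤ lovTheta X := by
  refine le_csSup ⟨Fintype.card γ, ?_⟩ ⟨M, hM, htr, hadj, rfl⟩
  rintro _ ⟨M, hM, htr, -, rfl⟩
  simpa [htr] using hM.sum_apply_le_card_mul_trace

theorem lovTheta_le {b : ℝ} (hb : 0 ≤ b)
    (h : ∀ M : Matrix γ γ ℝ, M.PosSemidef → M.trace = 1 →
      (∀ z z', X.Adj z z' → M z z' = 0) → ∑ z, ∑ z', M z z' ≤ b) :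
    lovTheta X ≤ b :=
  Real.sSup_le (by rintro _ ⟨M, hM, htr, hadj, rfl⟩; exact h M hM htr hadj) hb

omit [Fintype γ] in
theorem one_le_of_posSemidef_sub_allOnes [Nonempty γ] {N : Matrix γ γ ℝ} {t : ℝ}
    (hdiag : ∀ z, N z z = t) (hNJ : (N - 𝐉).PosSemidef) : 1 ≤ t := by
  obtain ⟨z⟩ := ‹Nonempty γ›
  simpa [hdiag] using hNJ.diag_nonneg (i := z)

theorem lovThetaBar_le [Nonempty γ] {N : Matrix γ γ ℝ} {t : ℝ} (hN : N.PosSemidef)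
    (hdiag : ∀ z, N z z = t) (hadj : ∀ z z', X.Adj z z' → N z z' = 0)
    (hNJ : (N - 𝐉).PosSemidef) : lovThetaBar X ≤ t :=
  csInf_le ⟨1, by rintro _ ⟨N, -, hdiag, -, hNJ⟩; exact one_le_of_posSemidef_sub_allOnes hdiag hNJ⟩
    ⟨N, hN, hdiag, hadj, hNJ⟩

theorem exists_lovThetaBar_matrix_card :
    ∃ N : Matrix γ γ ℝ, N.PosSemidef ∧ (∀ z, N z z = Fintype.card γ) ∧
      (∀ z z', X.Adj z z' → N z z' = 0) ∧ (N - 𝐉).PosSemidef := by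
  classical
  exact ⟨(Fintype.card γ : ℝ) • 1, PosSemidef.one.smul (by positivity), fun z => by simp,
    fun z z' h => by simp [h.ne], posSemidef_card_smul_one_sub_allOnes⟩

theorem le_lovThetaBar {b : ℝ}
    (h : ∀ (N : Matrix γ γ ℝ) (t : ℝ), N.PosSemidef → (∀ z, N z z = t) →
      (∀ z z', X.Adj z z' → N z z' = 0) → (N - 𝐉).PosSemidef → b ≤ t) :
    b ≤ lovThetaBar X := by
  refine le_csInf ⟨_, exists_lovThetaBar_matrix_card X⟩ ?_
  rintro _ ⟨N, hN, hdiag, hadj, hNJ⟩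
  exact h N _ hN hdiag hadj hNJ

theorem one_le_lovThetaBar [Nonempty γ] : 1 ≤ lovThetaBar X :=
  le_lovThetaBar X fun _ _ _ hdiag _ hNJ => one_le_of_posSemidef_sub_allOnes hdiag hNJ

/-- `N / (n t)` is feasible for `ϑ`, and `∑ N ≥ ∑ J = n²` since `N - J ⪰ 0`. -/
theorem card_div_le_lovTheta [Nonempty γ] {N : Matrix γ γ ℝ} {t : ℝ} (hN : N.PosSemidef)
    (hdiag : ∀ z, N z z = t) (hadj : ∀ z z', X.Adj z z' → N z z' = 0)
    (hNJ : (N - 𝐉).PosSemidef) : (Fintype.card γ : ℝ) / t ≤ lovTheta X := by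
  set n : ℝ := (Fintype.card γ : ℝ)
  have ht : 0 < t := one_pos.trans_le (one_le_of_posSemidef_sub_allOnes hdiag hNJ)
  have htr : N.trace = n * t := by simp [trace, hdiag, n]
  have hsum : n * n ≤ ∑ z, ∑ z', N z z' := by
    have := hNJ.sum_apply_nonneg
    simp only [Matrix.sub_apply, of_apply, Finset.sum_sub_distrib, Finset.sum_const,
      Finset.card_univ, nsmul_eq_mul, mul_one] at this
    linarith
  calc n / t = (n * t)⁻¹ * (n * n) := by field_simp
    _ ≤ (n * t)⁻¹ * ∑ z, ∑ z', N z z' := by gcongr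
    _ = ∑ z, ∑ z', ((n * t)⁻¹ • N) z z' := by simp [Finset.mul_sum]
    _ ≤ lovTheta X := by
      refine sum_le_lovTheta X (hN.smul (by positivity)) ?_ fun z z' h => by simp [hadj z z' h]
      rw [trace_smul, htr, smul_eq_mul, inv_mul_cancel₀ (by positivity)]

theorem card_le_lovTheta_mul_lovThetaBar [Nonempty γ] :
    (Fintype.card γ : ℝ) ≤ lovTheta X * lovThetaBar X := by
  have hθ : 0 < lovTheta X := by
    obtain ⟨N, hN, hdiag, hadj, hNJ⟩ := exists_lovThetaBar_matrix_card X
    have := card_div_le_lovTheta X hN hdiag hadj hNJ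
    rw [div_self (by positivity)] at this
    linarith
  rw [← div_le_iff₀' hθ]
  refine le_lovThetaBar X fun N t hN hdiag hadj hNJ => ?_
  have ht : 0 < t := one_pos.trans_le (one_le_of_posSemidef_sub_allOnes hdiag hNJ)
  rw [div_le_iff₀ hθ, ← div_le_iff₀' ht]
  exact card_div_le_lovTheta X hN hdiag hadj hNJ

theorem exists_lovThetaBar_matrix_of_transitive [Nonempty γ]
    (htrans : ∀ u v : γ, ∃ φ : X ≃g X, φ u = v) {M : Matrix γ γ ℝ} (hM : M.PosSemidef)
    (htr : M.trace = 1) (hadj : ∀ z z', X.Adj z z' → M z z' = 0)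
    (hr : 0 < ∑ z, ∑ z', M z z') :
    ∃ N : Matrix γ γ ℝ, N.PosSemidef ∧ (∀ z, N z z = (Fintype.card γ : ℝ) / ∑ z, ∑ z', M z z') ∧
      (∀ z z', X.Adj z z' → N z z' = 0) ∧ (N - 𝐉).PosSemidef := by
  have := Fintype.ofFinite (X ≃g X)
  have : MulAction.IsPretransitive (X ≃g X) γ := ⟨htrans⟩
  set A := groupSum (X ≃g X) M
  set r := ∑ z, ∑ z', M z z'
  set n : ℝ := (Fintype.card γ : ℝ)
  set g : ℝ := (Fintype.card (X ≃g X) : ℝ)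
  have hn : 0 < n := by positivity
  have hg : 0 < g := by positivity
  have hinv : ∀ (φ : X ≃g X) i j, A (φ • i) (φ • j) = A i j := groupSum_smul_apply _ M
  have hdiag : ∀ z, A z z = g / n := fun z => by
    have := card_smul_apply_self_of_smul_invariant _ hinv z
    rw [trace_groupSum _, htr, nsmul_eq_mul, nsmul_eq_mul] at this
    rw [eq_div_iff hn.ne']
    linarith
  have hrow : ∀ z, ∑ z', A z z' = g * r / n := fun z => by
    have := card_smul_sum_apply_of_smul_invariant _ hinv z
    rw [sum_groupSum_apply _, nsmul_eq_mul, nsmul_eq_mul] at this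
    rw [eq_div_iff hn.ne']
    linarith
  have hA : A.PosSemidef := hM.groupSum _
  refine ⟨(n ^ 2 / (g * r)) • A, hA.smul (by positivity), fun z => ?_, fun z z' h => ?_,
    (hA.smul (by positivity)).sub_allOnes fun z => ?_⟩
  · simp only [Matrix.smul_apply, hdiag, smul_eq_mul]
    field_simp
  · have hAzero : A z z' = 0 :=
      groupSum_apply_eq_zero _ M (fun (φ : X ≃g X) _ _ hij => φ.map_adj_iff.mpr hij) hadj h
    simp [hAzero]
  · simp only [Matrix.smul_apply, smul_eq_mul, ← Finset.mul_sum, hrow]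
    field_simp
    rfl

theorem lovTheta_mul_lovThetaBar_le_card_of_transitive [Nonempty γ]
    (htrans : ∀ u v : γ, ∃ φ : X ≃g X, φ u = v) :
    lovTheta X * lovThetaBar X ≤ Fintype.card γ := by
  have hθbar : 0 < lovThetaBar X := one_pos.trans_le (one_le_lovThetaBar X)
  rw [← le_div_iff₀ hθbar]
  refine lovTheta_le X (by positivity) fun M hM htr hadj => ?_
  rcases le_or_gt (∑ z, ∑ z', M z z') 0 with hr | hr
  · exact hr.trans (by positivity)
  obtain ⟨N, hN, hdiag, hadjN, hNJ⟩ :=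
    exists_lovThetaBar_matrix_of_transitive X htrans hM htr hadj hr
  rw [le_div_iff₀ hθbar, ← le_div_iff₀' hr]
  exact lovThetaBar_le X hN hdiag hadjN hNJ

end LovaszTheta

theorem stmt_7 {γ : Type*} [Fintype γ] [Nonempty γ] (X : SimpleGraph γ) :
    (Fintype.card γ : ℝ) ≤ lovTheta X * lovThetaBar X ∧
    ((∀ u v : γ, ∃ φ : X ≃g X, φ u = v) →
      lovTheta X * lovThetaBar X = (Fintype.card γ : ℝ)) :=
  ⟨card_le_lovTheta_mul_lovThetaBar X, fun htrans =>
    (lovTheta_mul_lovThetaBar_le_card_of_transitive X htrans).antisymm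
      (card_le_lovTheta_mul_lovThetaBar X)⟩
end

section
/- Let X be a finite simple graph on n vertices. Then ϑ⁻(X)·ϑ̄⁺(X) ≥ n, where ϑ⁻(X) is the supremum of ∑_{x,x'} M_{x,x'} over doubly nonnegative matrices M indexed by V(X) with tr(M) = 1 and M_{x,x'} = 0 whenever x is adjacent to x', and ϑ̄⁺(X) is the infimum of t ∈ ℝ such that there exists a doubly nonnegative matrix N indexed by V(X) with N_{x,x} = t for all x, N_{x,x'} = 0 whenever x is adjacent to x', and N − J positive semidefinite (J the all-ones matrix). Moreover, if X is vertex-transitive then ϑ⁻(X)·ϑ̄⁺(X) = n. -/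
/-!
If `N` is feasible for `ϑ̄⁺(X)` with diagonal `t`, testing `N - J` on the all-ones vector gives
`∑ N ≥ n²`, so `N / (n t)` is feasible for `ϑ⁻(X)` with value at least `n / t`.

Conversely, for vertex-transitive `X`, averaging a feasible `M` of `ϑ⁻(X)` with value `r` over
`Aut X` gives a matrix `B` with constant diagonal and constant row sums `s`. Then `B - (s / n) J`
is again positive semidefinite, and the right multiple of `B` is feasible for `ϑ̄⁺(X)` with
diagonal `n / r`.
-/

open Matrix

/-- A real matrix is completely positive if it equals `Pᵀ * P`
for some entrywise nonnegative real matrix `P`. -/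
def IsCP {ι : Type*} (H : Matrix ι ι ℝ) : Prop :=
  ∃ (n : ℕ) (P : Matrix (Fin n) ι ℝ), (∀ i j, 0 ≤ P i j) ∧ H = Pᵀ * P

/-- A real matrix indexed by `ι` is completely positive semidefinite if it is the Gram
matrix of real positive semidefinite `d × d` matrices for some `d ≥ 1`. -/
def IsCPSD {ι : Type*} (H : Matrix ι ι ℝ) : Prop :=
  ∃ d : ℕ, 0 < d ∧ ∃ ρ : ι → Matrix (Fin d) (Fin d) ℝ,
    (∀ i, (ρ i).PosSemidef) ∧ ∀ i j, H i j = (ρ i * ρ j).trace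

/-- A real matrix is doubly nonnegative if it is positive semidefinite
and entrywise nonnegative. -/
def IsDNN {ι : Type*} [Fintype ι] (H : Matrix ι ι ℝ) : Prop :=
  H.PosSemidef ∧ ∀ i j, 0 ≤ H i j

/-- Schrijver's theta `ϑ⁻(Z)`: optimize over doubly nonnegative matrices. -/
noncomputable def thetaMinus {γ : Type*} [Fintype γ] (Z : SimpleGraph γ) : ℝ :=
  sSup {r : ℝ | ∃ M : Matrix γ γ ℝ, IsDNN M ∧ M.trace = 1 ∧
    (∀ z z', Z.Adj z z' → M z z' = 0) ∧ r = ∑ z, ∑ z', M z z'}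

/-- Szegedy's theta of the complement, `ϑ̄⁺(Z) = Θ^{DNN}(Z)`. -/
noncomputable def thetaBarPlus {γ : Type*} [Fintype γ] (Z : SimpleGraph γ) : ℝ :=
  sInf {t : ℝ | ∃ N : Matrix γ γ ℝ, IsDNN N ∧ (∀ z, N z z = t) ∧
    (∀ z z', Z.Adj z z' → N z z' = 0) ∧
    (N - Matrix.of fun _ _ => (1 : ℝ)).PosSemidef}

instance SimpleGraph.Iso.instFinite {V W : Type*} [Finite V] [Finite W]
    {G : SimpleGraph V} {H : SimpleGraph W} : Finite (G ≃g H) :=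
  DFunLike.finite _

theorem Matrix.one_le_of_posSemidef_sub_ones {γ : Type*} [Nonempty γ] {N : Matrix γ γ ℝ}
    {t : ℝ} (hdiag : ∀ z, N z z = t) (hN : (N - of fun _ _ => (1 : ℝ)).PosSemidef) : 1 ≤ t := by
  obtain ⟨z⟩ := ‹Nonempty γ›
  have h := hN.diag_nonneg (i := z)
  simp only [Matrix.sub_apply, of_apply, hdiag z] at h
  linarith

section

variable {γ : Type*} [Fintype γ]

namespace Matrix

theorem PosSemidef.add_le_diag_add {M : Matrix γ γ ℝ} (hM : M.PosSemidef) (i j : γ) :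
    M i j + M j i ≤ M i i + M j j := by
  classical
  have h := hM.dotProduct_mulVec_nonneg (Pi.single i 1 - Pi.single j 1)
  simp [dotProduct, mulVec, Pi.single_apply, sub_mul, mul_sub, Finset.sum_sub_distrib] at h
  linarith

theorem PosSemidef.sum_entries_le_card_mul_trace {M : Matrix γ γ ℝ} (hM : M.PosSemidef) :
    ∑ i, ∑ j, M i j ≤ Fintype.card γ * M.trace := by
  have h := Finset.sum_le_sum fun i (_ : i ∈ Finset.univ) =>
    Finset.sum_le_sum fun j (_ : j ∈ Finset.univ) => hM.add_le_diag_add i j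
  simp only [Finset.sum_add_distrib, Finset.sum_const, Finset.card_univ, nsmul_eq_mul] at h
  rw [Finset.sum_comm (f := fun i j => M j i), ← Finset.mul_sum] at h
  simp only [trace, diag]
  linarith

theorem trace_le_sum_entries {M : Matrix γ γ ℝ} (hM : ∀ i j, 0 ≤ M i j) :
    M.trace ≤ ∑ i, ∑ j, M i j :=
  Finset.sum_le_sum fun i _ => Finset.single_le_sum (fun j _ => hM i j) (Finset.mem_univ i)

theorem card_sq_le_sum_entries_of_posSemidef_sub_ones {N : Matrix γ γ ℝ}
    (hN : (N - of fun _ _ => (1 : ℝ)).PosSemidef) :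
    (Fintype.card γ : ℝ) ^ 2 ≤ ∑ i, ∑ j, N i j := by
  have h := hN.dotProduct_mulVec_nonneg fun _ => 1
  simp only [star_trivial, dotProduct, mulVec, sub_apply, of_apply, one_mul, mul_one,
    Finset.sum_sub_distrib, Finset.sum_const, Finset.card_univ, nsmul_eq_mul] at h
  linarith

theorem PosSemidef.sub_smul_ones {B : Matrix γ γ ℝ} (hB : B.PosSemidef) {s : ℝ}
    (hrow : ∀ i, ∑ j, B i j = s) :
    (B - (s / Fintype.card γ) • of fun _ _ => (1 : ℝ)).PosSemidef := by
  classical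
  set n : ℝ := (Fintype.card γ : ℝ)
  set J : Matrix γ γ ℝ := of fun _ _ => 1 with hJ
  have hBJ : B * J = s • J := by
    ext i j
    simp [hJ, mul_apply, hrow]
  have hJB : J * B = s • J := by
    ext i j
    simp only [hJ, mul_apply, of_apply, one_mul, smul_apply, smul_eq_mul, mul_one, ← hrow j]
    refine Finset.sum_congr rfl fun k _ => ?_
    simpa using hB.isHermitian.apply j k
  have hJJ : J * J = n • J := by
    ext i j
    simp [hJ, mul_apply, n]
  have hn : n⁻¹ * n⁻¹ * n = n⁻¹ := by
    rcases eq_or_ne n 0 with h | h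
    · simp [h]
    · field_simp
  -- `B - (s/n) J` is `B` compressed to the orthogonal complement of the all-ones vector.
  set P : Matrix γ γ ℝ := 1 - n⁻¹ • J
  have hP : Pᴴ = P := by
    ext i j
    simp [P, hJ, one_apply, eq_comm]
  have hPBP : Pᴴ * B * P = B - (s / n) • J := by
    rw [hP]
    simp only [P, Matrix.sub_mul, Matrix.mul_sub, Matrix.one_mul, Matrix.mul_one, Matrix.smul_mul,
      Matrix.mul_smul, hBJ, hJB, hJJ]
    match_scalars
    · ring
    · linear_combination s * hn
  rw [← hPBP]
  exact hB.conjTranspose_mul_mul_same P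

end Matrix

theorem IsDNN.smul {M : Matrix γ γ ℝ} (hM : IsDNN M) {c : ℝ} (hc : 0 ≤ c) : IsDNN (c • M) :=
  ⟨hM.1.smul hc, fun i j => mul_nonneg hc (hM.2 i j)⟩

end

namespace SimpleGraph

variable {γ : Type*} [Fintype γ] (X : SimpleGraph γ)

theorem sum_entries_le_thetaMinus {M : Matrix γ γ ℝ} (hM : IsDNN M) (htr : M.trace = 1)
    (hX : ∀ z z', X.Adj z z' → M z z' = 0) : ∑ z, ∑ z', M z z' ≤ thetaMinus X := by
  refine le_csSup ⟨Fintype.card γ, ?_⟩ ⟨M, hM, htr, hX, rfl⟩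
  rintro _ ⟨M, hM, htr, -, rfl⟩
  simpa [htr] using hM.1.sum_entries_le_card_mul_trace

theorem exists_isDNN_trace_eq_one [Nonempty γ] :
    ∃ M : Matrix γ γ ℝ, IsDNN M ∧ M.trace = 1 ∧ ∀ z z', X.Adj z z' → M z z' = 0 := by
  classical
  have hn : (0 : ℝ) < Fintype.card γ := by exact_mod_cast Fintype.card_pos
  refine ⟨(Fintype.card γ : ℝ)⁻¹ • 1, IsDNN.smul ⟨.one, fun i j => ?_⟩ (by positivity), ?_, ?_⟩
  · by_cases h : i = j <;> simp [one_apply, h]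
  · simp [trace_smul, hn.ne']
  · intro z z' h
    simp [one_apply_ne h.ne]

theorem one_le_thetaMinus [Nonempty γ] : 1 ≤ thetaMinus X := by
  obtain ⟨M, hM, htr, hX⟩ := X.exists_isDNN_trace_eq_one
  exact htr ▸ (trace_le_sum_entries hM.2).trans (X.sum_entries_le_thetaMinus hM htr hX)

theorem thetaMinus_le [Nonempty γ] {c : ℝ}
    (h : ∀ M : Matrix γ γ ℝ, IsDNN M → M.trace = 1 → (∀ z z', X.Adj z z' → M z z' = 0) →
      ∑ z, ∑ z', M z z' ≤ c) :
    thetaMinus X ≤ c := by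
  obtain ⟨M, hM, htr, hX⟩ := X.exists_isDNN_trace_eq_one
  refine csSup_le ⟨_, M, hM, htr, hX, rfl⟩ ?_
  rintro _ ⟨M, hM, htr, hX, rfl⟩
  exact h M hM htr hX

theorem thetaBarPlus_le [Nonempty γ] {N : Matrix γ γ ℝ} {t : ℝ} (hN : IsDNN N)
    (hdiag : ∀ z, N z z = t) (hX : ∀ z z', X.Adj z z' → N z z' = 0)
    (hJ : (N - of fun _ _ => (1 : ℝ)).PosSemidef) :
    thetaBarPlus X ≤ t := by
  refine csInf_le ⟨1, ?_⟩ ⟨N, hN, hdiag, hX, hJ⟩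
  rintro _ ⟨N, -, hdiag, -, hJ⟩
  exact Matrix.one_le_of_posSemidef_sub_ones hdiag hJ

theorem le_thetaBarPlus [Nonempty γ] {c : ℝ}
    (h : ∀ (N : Matrix γ γ ℝ) (t : ℝ), IsDNN N → (∀ z, N z z = t) →
      (∀ z z', X.Adj z z' → N z z' = 0) → (N - of fun _ _ => (1 : ℝ)).PosSemidef → c ≤ t) :
    c ≤ thetaBarPlus X := by
  classical
  have hn : (0 : ℝ) < Fintype.card γ := by exact_mod_cast Fintype.card_pos
  set n : ℝ := (Fintype.card γ : ℝ)
  have hJ : (n • (1 : Matrix γ γ ℝ) - of fun _ _ => 1).PosSemidef := by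
    have := (PosSemidef.one.smul hn.le : (n • (1 : Matrix γ γ ℝ)).PosSemidef).sub_smul_ones
      (s := n) fun i => by simp [one_apply]
    rwa [div_self hn.ne', one_smul] at this
  refine le_csInf ⟨n, n • 1, IsDNN.smul ⟨.one, fun i j => ?_⟩ hn.le, ?_, ?_, hJ⟩ ?_
  · by_cases h : i = j <;> simp [one_apply, h]
  · simp
  · intro z z' h
    simp [one_apply_ne h.ne]
  · rintro t ⟨N, hN, hdiag, hX, hJ⟩
    exact h N t hN hdiag hX hJ

theorem one_le_thetaBarPlus [Nonempty γ] : 1 ≤ thetaBarPlus X :=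
  X.le_thetaBarPlus fun _ _ _ hdiag _ hJ => Matrix.one_le_of_posSemidef_sub_ones hdiag hJ

theorem card_div_le_thetaMinus [Nonempty γ] {N : Matrix γ γ ℝ} {t : ℝ} (hN : IsDNN N)
    (hdiag : ∀ z, N z z = t) (hX : ∀ z z', X.Adj z z' → N z z' = 0)
    (hJ : (N - of fun _ _ => (1 : ℝ)).PosSemidef) :
    Fintype.card γ / t ≤ thetaMinus X := by
  have hn : (0 : ℝ) < Fintype.card γ := by exact_mod_cast Fintype.card_pos
  set n : ℝ := (Fintype.card γ : ℝ)
  have ht : 0 < t := one_pos.trans_le (Matrix.one_le_of_posSemidef_sub_ones hdiag hJ)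
  have htr : N.trace = n * t := by simp [trace, hdiag, n]
  calc n / t = (n * t)⁻¹ * n ^ 2 := by field_simp
    _ ≤ (n * t)⁻¹ * ∑ z, ∑ z', N z z' := by
      gcongr
      exact card_sq_le_sum_entries_of_posSemidef_sub_ones hJ
    _ = ∑ z, ∑ z', ((n * t)⁻¹ • N) z z' := by simp [Finset.mul_sum]
    _ ≤ thetaMinus X := by
      refine X.sum_entries_le_thetaMinus (hN.smul (by positivity)) ?_ fun z z' h => ?_
      · rw [trace_smul, htr, smul_eq_mul, inv_mul_cancel₀ (by positivity)]
      · simp [hX z z' h]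

theorem card_le_thetaMinus_mul_thetaBarPlus [Nonempty γ] :
    (Fintype.card γ : ℝ) ≤ thetaMinus X * thetaBarPlus X := by
  have hθ : 0 < thetaMinus X := one_pos.trans_le X.one_le_thetaMinus
  rw [mul_comm, ← div_le_iff₀ hθ]
  refine X.le_thetaBarPlus fun N t hN hdiag hX hJ => ?_
  have ht : 0 < t := one_pos.trans_le (Matrix.one_le_of_posSemidef_sub_ones hdiag hJ)
  rw [div_le_comm₀ hθ ht]
  exact X.card_div_le_thetaMinus hN hdiag hX hJ

theorem card_mul_sum_aut_apply [Fintype (X ≃g X)] (hvt : ∀ u v : γ, ∃ φ : X ≃g X, φ u = v)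
    (f : γ → ℝ) (u : γ) :
    Fintype.card γ * ∑ φ : X ≃g X, f (φ u) = Fintype.card (X ≃g X) * ∑ v, f v := by
  have hconst : ∀ v, ∑ φ : X ≃g X, f (φ v) = ∑ φ : X ≃g X, f (φ u) := by
    intro v
    obtain ⟨ψ, rfl⟩ := hvt u v
    exact Fintype.sum_equiv (Equiv.mulRight ψ) _ _ fun φ => rfl
  calc Fintype.card γ * ∑ φ : X ≃g X, f (φ u) = ∑ v, ∑ φ : X ≃g X, f (φ v) := by simp [hconst]
    _ = ∑ φ : X ≃g X, ∑ v, f (φ v) := Finset.sum_comm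
    _ = ∑ φ : X ≃g X, ∑ v, f v := Finset.sum_congr rfl fun φ _ => φ.toEquiv.sum_comp f
    _ = Fintype.card (X ≃g X) * ∑ v, f v := by simp

theorem exists_isDNN_diag_eq_card_div_of_vertexTransitive [Nonempty γ]
    (hvt : ∀ u v : γ, ∃ φ : X ≃g X, φ u = v) {M : Matrix γ γ ℝ} (hM : IsDNN M)
    (htr : M.trace = 1) (hX : ∀ z z', X.Adj z z' → M z z' = 0) :
    ∃ N : Matrix γ γ ℝ, IsDNN N ∧ (∀ z, N z z = Fintype.card γ / ∑ z, ∑ z', M z z') ∧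
      (∀ z z', X.Adj z z' → N z z' = 0) ∧ (N - of fun _ _ => (1 : ℝ)).PosSemidef := by
  let := Fintype.ofFinite (X ≃g X)
  have hn : (0 : ℝ) < Fintype.card γ := by exact_mod_cast Fintype.card_pos
  have hk : (0 : ℝ) < Fintype.card (X ≃g X) := by exact_mod_cast Fintype.card_pos
  have hr : 0 < ∑ z, ∑ z', M z z' := one_pos.trans_le (htr ▸ trace_le_sum_entries hM.2)
  set n : ℝ := (Fintype.card γ : ℝ)
  set k : ℝ := (Fintype.card (X ≃g X) : ℝ)
  set r := ∑ z, ∑ z', M z z'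
  set B : Matrix γ γ ℝ := ∑ φ : X ≃g X, M.submatrix φ φ
  have hB : ∀ a b, B a b = ∑ φ : X ≃g X, M (φ a) (φ b) := by simp [B, Matrix.sum_apply]
  have hBpsd : B.PosSemidef := posSemidef_sum _ fun φ _ => hM.1.submatrix _
  have hBdiag : ∀ z, n * B z z = k := by
    intro z
    rw [hB, X.card_mul_sum_aut_apply hvt (fun a => M a a)]
    simp [← htr, trace, k]
  have hBrow : ∀ z, ∑ z', B z z' = k * r / n := by
    intro z
    rw [eq_div_iff hn.ne', mul_comm]
    calc n * ∑ z', B z z' = n * ∑ φ : X ≃g X, ∑ z', M (φ z) z' := by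
          simp_rw [hB]
          rw [Finset.sum_comm]
          exact congrArg _ (Finset.sum_congr rfl fun φ _ => φ.toEquiv.sum_comp (M (φ z)))
      _ = k * r := X.card_mul_sum_aut_apply hvt (fun a => ∑ z', M a z') z
  have hc : 0 < n ^ 2 / (k * r) := by positivity
  refine ⟨(n ^ 2 / (k * r)) • B, IsDNN.smul ⟨hBpsd, fun a b => ?_⟩ hc.le, fun z => ?_,
    fun z z' h => ?_, ?_⟩
  · rw [hB]
    exact Finset.sum_nonneg fun φ _ => hM.2 _ _
  · rw [Matrix.smul_apply, smul_eq_mul]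
    field_simp
    exact hBdiag z
  · simp [hB, fun φ : X ≃g X => hX _ _ (φ.map_adj_iff.mpr h)]
  · convert (hBpsd.sub_smul_ones hBrow).smul hc.le using 1
    rw [smul_sub, smul_smul, show n ^ 2 / (k * r) * (k * r / n / n) = 1 by field_simp, one_smul]

theorem thetaMinus_mul_thetaBarPlus_le_of_vertexTransitive [Nonempty γ]
    (hvt : ∀ u v : γ, ∃ φ : X ≃g X, φ u = v) :
    thetaMinus X * thetaBarPlus X ≤ Fintype.card γ := by
  have hθ : 0 < thetaBarPlus X := one_pos.trans_le X.one_le_thetaBarPlus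
  rw [← le_div_iff₀ hθ]
  refine X.thetaMinus_le fun M hM htr hX => ?_
  have hr : 0 < ∑ z, ∑ z', M z z' := one_pos.trans_le (htr ▸ trace_le_sum_entries hM.2)
  obtain ⟨N, hN, hdiag, hXN, hJ⟩ :=
    X.exists_isDNN_diag_eq_card_div_of_vertexTransitive hvt hM htr hX
  rw [le_div_comm₀ hr hθ]
  exact X.thetaBarPlus_le hN hdiag hXN hJ

end SimpleGraph

theorem stmt_8 {γ : Type*} [Fintype γ] [Nonempty γ] (X : SimpleGraph γ) :
    (Fintype.card γ : ℝ) ≤ thetaMinus X * thetaBarPlus X ∧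
    ((∀ u v : γ, ∃ φ : X ≃g X, φ u = v) →
      thetaMinus X * thetaBarPlus X = (Fintype.card γ : ℝ)) :=
  ⟨X.card_le_thetaMinus_mul_thetaBarPlus, fun hvt =>
    (X.thetaMinus_mul_thetaBarPlus_le_of_vertexTransitive hvt).antisymm
      X.card_le_thetaMinus_mul_thetaBarPlus⟩
end

section
/- Let X be a finite simple graph, let d, r ≥ 1, and let P_x (x ∈ V(X)) be real symmetric idempotent d×d matrices, each of rank r, such that P_x P_{x'} = 0 whenever x is adjacent to x'. Then Θ^{CS+}(X) ≤ d/r, where Θ^{CS+}(X) is the infimum of t ∈ ℝ such that there exists a completely positive semidefinite matrix N indexed by V(X) with N_{x,x} = t for all x, N_{x,x'} = 0 whenever x is adjacent to x', and N − J positive semidefinite (J the all-ones matrix). -/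
open Matrix

/-- The CPSD variant `Θ^{CS₊}(Z)` of the theta function of the complement. -/
noncomputable def ThetaCSPD {γ : Type*} [Fintype γ] (Z : SimpleGraph γ) : ℝ :=
  sInf {t : ℝ | ∃ N : Matrix γ γ ℝ, IsCPSD N ∧ (∀ z, N z z = t) ∧
    (∀ z z', Z.Adj z z' → N z z' = 0) ∧
    (N - Matrix.of fun _ _ => (1 : ℝ)).PosSemidef}

/-! Rescale the projectors to `ρ x = (√d / r) • P x`. The trace Gram matrix `N` of the `ρ x` is
completely positive semidefinite by construction, has diagonal `d / r` and vanishes on edges.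
For `N - J ⪰ 0`, put `M = ∑ v x • ρ x`: then `vᵀ N v = tr (M * M)` and `∑ v x = tr M / √d`, so
`(∑ v x)² ≤ vᵀ N v` is the Cauchy–Schwarz inequality `(tr M)² ≤ d · tr (Mᵀ * M)`. -/

namespace Matrix

variable {ι n R : Type*} [Fintype n]

theorem trace_eq_rank_of_isIdempotentElem [DecidableEq n] {K : Type*} [Field K]
    {A : Matrix n n K} (hA : IsIdempotentElem A) : A.trace = A.rank := by
  have hlin : IsIdempotentElem A.toLin' := hA.map toLinAlgEquiv'
  have := (LinearMap.IsIdempotentElem.isProj_range _ hlin).trace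
  rwa [LinearMap.trace_eq_matrix_trace K (Pi.basisFun K n), LinearMap.toMatrix_eq_toMatrix',
    LinearMap.toMatrix'_toLin'] at this

open scoped ComplexOrder MatrixOrder in
theorem IsStarProjection.posSemidef {𝕜 : Type*} [RCLike 𝕜] {A : Matrix n n 𝕜}
    (hA : IsStarProjection A) : A.PosSemidef :=
  hA.nonneg.posSemidef

theorem trace_sq_le_card_mul_trace_transpose_mul (M : Matrix n n ℝ) :
    M.trace ^ 2 ≤ Fintype.card n * (Mᵀ * M).trace := by
  have hdiag : ∑ i, M i i ^ 2 ≤ (Mᵀ * M).trace :=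
    Finset.sum_le_sum fun i _ => by
      simpa only [diag, mul_apply, transpose_apply, sq] using
        Finset.single_le_sum (fun j _ => mul_self_nonneg (M j i)) (Finset.mem_univ i)
  calc M.trace ^ 2 ≤ Fintype.card n * ∑ i, M i i ^ 2 := sq_sum_le_card_mul_sum_sq
    _ ≤ _ := by gcongr

def traceGram [Mul R] [AddCommMonoid R] (ρ : ι → Matrix n n R) : Matrix ι ι R :=
  of fun i j => (ρ i * ρ j).trace

theorem traceGram_transpose [CommRing R] (ρ : ι → Matrix n n R) :
    (traceGram ρ)ᵀ = traceGram ρ :=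
  ext fun i j => trace_mul_comm (ρ j) (ρ i)

theorem dotProduct_traceGram_mulVec [Fintype ι] [CommRing R] (ρ : ι → Matrix n n R) (v : ι → R) :
    v ⬝ᵥ traceGram ρ *ᵥ v = ((∑ i, v i • ρ i) * ∑ i, v i • ρ i).trace := by
  rw [Finset.sum_mul_sum, trace_sum]
  refine Finset.sum_congr rfl fun i _ => ?_
  rw [mulVec, dotProduct, Finset.mul_sum, trace_sum]
  refine Finset.sum_congr rfl fun j _ => ?_
  simp only [traceGram, of_apply, smul_mul_smul_comm, trace_smul, smul_eq_mul]
  ring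

theorem dotProduct_ones_mulVec [Fintype ι] [CommRing R] (v : ι → R) :
    v ⬝ᵥ (of fun _ _ => (1 : R)) *ᵥ v = (∑ i, v i) ^ 2 := by
  simp [dotProduct, mulVec, sq, Finset.mul_sum, mul_comm]

theorem posSemidef_traceGram_sub_ones [Fintype ι] [Nonempty n] {ρ : ι → Matrix n n ℝ} {s : ℝ}
    (hsymm : ∀ i, (ρ i)ᵀ = ρ i) (htrace : ∀ i, (ρ i).trace = s)
    (hcard : (Fintype.card n : ℝ) ≤ s ^ 2) :
    (traceGram ρ - of fun _ _ => (1 : ℝ)).PosSemidef := by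
  refine .of_dotProduct_mulVec_nonneg ?_ fun v => ?_
  · rw [IsHermitian, conjTranspose_eq_transpose_of_trivial, transpose_sub, traceGram_transpose]
    rfl
  set M := ∑ i, v i • ρ i
  have hMsymm : Mᵀ = M := by simp only [M, transpose_sum, transpose_smul, hsymm]
  have hMtrace : M.trace = s * ∑ i, v i := by
    simp only [M, trace_sum, trace_smul, htrace, smul_eq_mul, Finset.mul_sum, mul_comm]
  have hCS := trace_sq_le_card_mul_trace_transpose_mul M
  rw [hMsymm, hMtrace] at hCS
  have hcard_pos : (0 : ℝ) < Fintype.card n := Nat.cast_pos.mpr Fintype.card_pos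
  rw [star_trivial, sub_mulVec, dotProduct_sub, dotProduct_traceGram_mulVec,
    dotProduct_ones_mulVec, sub_nonneg]
  nlinarith [sq_nonneg (∑ i, v i)]

theorem isCPSD_traceGram {d : ℕ} (hd : 0 < d) {ρ : ι → Matrix (Fin d) (Fin d) ℝ}
    (hρ : ∀ i, (ρ i).PosSemidef) : IsCPSD (traceGram ρ) :=
  ⟨d, hd, ρ, hρ, fun _ _ => rfl⟩

end Matrix

theorem ThetaCSPD_le_of_feasible {γ : Type*} [Fintype γ] (Z : SimpleGraph γ) {t : ℝ}
    (ht : 0 ≤ t) {N : Matrix γ γ ℝ} (hN : IsCPSD N) (hdiag : ∀ z, N z z = t)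
    (hadj : ∀ z z', Z.Adj z z' → N z z' = 0) (hpsd : (N - of fun _ _ => (1 : ℝ)).PosSemidef) :
    ThetaCSPD Z ≤ t := by
  rcases isEmpty_or_nonempty γ with _ | ⟨⟨z⟩⟩
  · -- With no vertices every `t` is feasible, and `sInf univ = 0` is a junk value.
    have huniv : {t : ℝ | ∃ N : Matrix γ γ ℝ, IsCPSD N ∧ (∀ z, N z z = t) ∧
        (∀ z z', Z.Adj z z' → N z z' = 0) ∧ (N - of fun _ _ => (1 : ℝ)).PosSemidef} =
        Set.univ :=
      Set.eq_univ_of_forall fun _ => ⟨N, hN, isEmptyElim, hadj, hpsd⟩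
    rw [ThetaCSPD, huniv, Real.sInf_of_not_bddBelow not_bddBelow_univ]
    exact ht
  · refine csInf_le ⟨1, ?_⟩ ⟨N, hN, hdiag, hadj, hpsd⟩
    rintro t' ⟨N', -, hdiag', -, hpsd'⟩
    simpa only [Matrix.sub_apply, of_apply, hdiag', sub_nonneg] using hpsd'.diag_nonneg (i := z)

theorem stmt_19 {α : Type*} [Fintype α] (X : SimpleGraph α)
    (d r : ℕ) (hd : 0 < d) (hr : 0 < r) (P : α → Matrix (Fin d) (Fin d) ℝ)
    (hsymm : ∀ x, (P x).IsSymm) (hidem : ∀ x, P x * P x = P x)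
    (hrank : ∀ x, (P x).rank = r)
    (horth : ∀ x x', X.Adj x x' → P x * P x' = 0) :
    ThetaCSPD X ≤ (d : ℝ) / r := by
  have hr' : (0 : ℝ) < r := Nat.cast_pos.mpr hr
  have htrace (x : α) : (P x).trace = r := by
    rw [trace_eq_rank_of_isIdempotentElem (hidem x), hrank x]
  set ρ : α → Matrix (Fin d) (Fin d) ℝ := fun x => (√d / r) • P x
  have hρpsd (x : α) : (ρ x).PosSemidef :=
    (IsStarProjection.posSemidef ⟨hidem x, isHermitian_iff_isSymm.mpr (hsymm x)⟩).smul
      (by positivity)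
  have hρtrace (x : α) : (ρ x).trace = √d := by
    rw [trace_smul, htrace, smul_eq_mul, div_mul_cancel₀ _ hr'.ne']
  have : Nonempty (Fin d) := ⟨⟨0, hd⟩⟩
  refine ThetaCSPD_le_of_feasible X (by positivity) (isCPSD_traceGram hd hρpsd)
    (fun x => ?_) (fun x x' hxx' => ?_)
    (posSemidef_traceGram_sub_ones (fun x => by simp only [ρ, transpose_smul, (hsymm x).eq])
      hρtrace (by simp))
  · rw [traceGram, of_apply, smul_mul_smul_comm, hidem x, trace_smul, htrace, smul_eq_mul,
      ← mul_div_mul_comm, Real.mul_self_sqrt d.cast_nonneg]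
    field_simp
  · simp [traceGram, ρ, horth x x' hxx']
end
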